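/- arXiv:1209.5566 — 5 statements merged into one kernel-verified Lean document; each statement's English description precedes it below -/
import Mathlib

section
/- In the Strict Turnstile model, where all counts satisfy C_k ≥ 0, if the Strict Bin Sketch counters satisfy X ≠ 0, Y ≠ 0, Z ≠ 0 and X·Z = Y², then the sketch holds a single element: there is exactly one value k₀ ∈ {1,…,m} with C_{k₀} ≠ 0, and moreover Y = X·k₀ and C_{k₀} = X. -/
/-- **Strict Bin Sketch, detection direction (Strict Turnstile model).**
If all counts are nonnegative and the counters satisfy `X ≠ 0`, `Y ≠ 0`, `Z ≠ 0`
and `X·Z = Y²`, then the sketch holds a single element: there is exactly one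
`k₀ ∈ {1,…,m}` with `C k₀ ≠ 0`, and moreover `Y = X·k₀` and `C k₀ = X`. -/
theorem strict_bin_sketch_detects_single_element
    (m : ℕ) (C : ℕ → ℤ)
    (hnonneg : ∀ k ∈ Finset.Icc 1 m, 0 ≤ C k)
    (X Y Z : ℤ)
    (hX : X = ∑ k ∈ Finset.Icc 1 m, C k)
    (hY : Y = ∑ k ∈ Finset.Icc 1 m, C k * (k : ℤ))
    (hZ : Z = ∑ k ∈ Finset.Icc 1 m, C k * (k : ℤ) ^ 2)
    (hX0 : X ≠ 0) (hY0 : Y ≠ 0) (hZ0 : Z ≠ 0) (hXZ : X * Z = Y ^ 2) :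
    ∃ k₀ ∈ Finset.Icc 1 m, C k₀ ≠ 0 ∧
      (∀ k ∈ Finset.Icc 1 m, k ≠ k₀ → C k = 0) ∧
      Y = X * (k₀ : ℤ) ∧ C k₀ = X := by
  set s := Finset.Icc 1 m with hs
  have e1 : X * Z = ∑ i ∈ s, ∑ j ∈ s, C i * C j * (j : ℤ) ^ 2 := by
    rw [hX, hZ, Finset.sum_mul_sum]
    exact Finset.sum_congr rfl fun i _ => Finset.sum_congr rfl fun j _ => by ring
  have e2 : X * Z = ∑ i ∈ s, ∑ j ∈ s, C i * C j * (i : ℤ) ^ 2 := by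
    rw [e1, Finset.sum_comm]
    exact Finset.sum_congr rfl fun i _ => Finset.sum_congr rfl fun j _ => by ring
  have e3 : Y ^ 2 = ∑ i ∈ s, ∑ j ∈ s, (C i * (i : ℤ)) * (C j * (j : ℤ)) := by
    rw [hY, sq, Finset.sum_mul_sum]
  have key : ∑ i ∈ s, ∑ j ∈ s, C i * C j * ((i : ℤ) - j) ^ 2 = 0 := by
    have : ∑ i ∈ s, ∑ j ∈ s, C i * C j * ((i : ℤ) - j) ^ 2 =
        (∑ i ∈ s, ∑ j ∈ s, C i * C j * (i : ℤ) ^ 2) +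
        (∑ i ∈ s, ∑ j ∈ s, C i * C j * (j : ℤ) ^ 2) -
        2 * ∑ i ∈ s, ∑ j ∈ s, (C i * (i : ℤ)) * (C j * (j : ℤ)) := by
      rw [Finset.mul_sum, ← Finset.sum_add_distrib, ← Finset.sum_sub_distrib]
      refine Finset.sum_congr rfl fun i _ => ?_
      rw [Finset.mul_sum, ← Finset.sum_add_distrib, ← Finset.sum_sub_distrib]
      exact Finset.sum_congr rfl fun j _ => by ring
    rw [this, ← e1, ← e2, ← e3, hXZ]; ring
  have hterm : ∀ i ∈ s, ∀ j ∈ s, C i ≠ 0 → C j ≠ 0 → i = j := by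
    intro i hi j hj hci hcj
    have h0 : ∀ i ∈ s, 0 ≤ ∑ j ∈ s, C i * C j * ((i : ℤ) - j) ^ 2 := by
      intro i hi
      exact Finset.sum_nonneg fun j hj =>
        mul_nonneg (mul_nonneg (hnonneg i hi) (hnonneg j hj)) (sq_nonneg _)
    have hiz := (Finset.sum_eq_zero_iff_of_nonneg h0).1 key i hi
    have h0' : ∀ j ∈ s, 0 ≤ C i * C j * ((i : ℤ) - j) ^ 2 := fun j hj =>
      mul_nonneg (mul_nonneg (hnonneg i hi) (hnonneg j hj)) (sq_nonneg _)
    have hij := (Finset.sum_eq_zero_iff_of_nonneg h0').1 hiz j hj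
    rcases mul_eq_zero.1 hij with h | h
    · rcases mul_eq_zero.1 h with h | h
      · exact absurd h hci
      · exact absurd h hcj
    · have : (i : ℤ) = j := by
        have := sq_eq_zero_iff.1 h
        linarith
      exact_mod_cast this
  obtain ⟨k₀, hk₀s, hk₀⟩ : ∃ k₀ ∈ s, C k₀ ≠ 0 := by
    by_contra h
    push_neg at h
    exact hX0 (hX.trans (Finset.sum_eq_zero h))
  have hzero : ∀ k ∈ s, k ≠ k₀ → C k = 0 := by
    intro k hk hne
    by_contra hc
    exact hne (hterm k hk k₀ hk₀s hc hk₀)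
  have hXk : C k₀ = X := by
    rw [hX, Finset.sum_eq_single_of_mem k₀ hk₀s fun k hk hne => hzero k hk hne]
  have hYk : Y = X * (k₀ : ℤ) := by
    rw [hY, Finset.sum_eq_single_of_mem k₀ hk₀s fun k hk hne => by
      rw [hzero k hk hne, zero_mul], hXk]
  exact ⟨k₀, hk₀s, hk₀, hzero, hYk, hXk⟩
end

section
/- If exactly two distinct values k₁ ≠ k₂ in {1,…,m} have nonzero integer counts C₁ and C₂ (all other counts being zero), then the Strict Bin Sketch counters satisfy X·Z − Y² = C₁·C₂·(k₁ − k₂)², and in particular X·Z ≠ Y²; hence a sketch holding exactly two elements is never mistaken for a sketch holding a single element. -/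
/-- **Strict Bin Sketch, two elements.**
If exactly two distinct values `k₁ ≠ k₂` in `{1,…,m}` have nonzero counts, then
`X·Z − Y² = C k₁ · C k₂ · (k₁ − k₂)²`, and in particular `X·Z ≠ Y²`; hence a
sketch holding exactly two elements is never mistaken for one holding a single
element. -/
theorem strict_bin_sketch_two_elements
    (m : ℕ) (C : ℕ → ℤ) (k₁ k₂ : ℕ)
    (hk₁ : k₁ ∈ Finset.Icc 1 m) (hk₂ : k₂ ∈ Finset.Icc 1 m) (hne : k₁ ≠ k₂)
    (hC₁ : C k₁ ≠ 0) (hC₂ : C k₂ ≠ 0)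
    (hrest : ∀ k ∈ Finset.Icc 1 m, k ≠ k₁ → k ≠ k₂ → C k = 0)
    (X Y Z : ℤ)
    (hX : X = ∑ k ∈ Finset.Icc 1 m, C k)
    (hY : Y = ∑ k ∈ Finset.Icc 1 m, C k * (k : ℤ))
    (hZ : Z = ∑ k ∈ Finset.Icc 1 m, C k * (k : ℤ) ^ 2) :
    X * Z - Y ^ 2 = C k₁ * C k₂ * ((k₁ : ℤ) - (k₂ : ℤ)) ^ 2 ∧ X * Z ≠ Y ^ 2 := by
  have hsub : ({k₁, k₂} : Finset ℕ) ⊆ Finset.Icc 1 m := by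
    intro k hk
    simp only [Finset.mem_insert, Finset.mem_singleton] at hk
    rcases hk with rfl | rfl <;> assumption
  have key : ∀ f : ℕ → ℤ, (∀ k, C k = 0 → f k = 0) →
      ∑ k ∈ Finset.Icc 1 m, f k = f k₁ + f k₂ := by
    intro f hf
    rw [← Finset.sum_subset hsub (fun k hk hnk => by
      apply hf
      apply hrest k hk
      · intro h; exact hnk (by simp [h])
      · intro h; exact hnk (by simp [h]))]
    rw [Finset.sum_insert (by simp [hne]), Finset.sum_singleton]
  rw [hX, hY, hZ, key _ (fun k h => h),
    key _ (fun k h => by rw [h, zero_mul]),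
    key _ (fun k h => by rw [h, zero_mul])]
  constructor
  · ring
  · intro h
    have h2 : C k₁ * C k₂ * ((k₁ : ℤ) - (k₂ : ℤ)) ^ 2 = 0 := by linear_combination h
    have hne' : ((k₁ : ℤ) - (k₂ : ℤ)) ≠ 0 :=
      sub_ne_zero_of_ne (by exact_mod_cast hne)
    rcases mul_eq_zero.1 h2 with h4 | h4
    · rcases mul_eq_zero.1 h4 with h5 | h5
      · exact hC₁ h5
      · exact hC₂ h5
    · exact hne' (pow_eq_zero_iff (by norm_num) |>.1 h4)
end

section
/- For every natural number k and every bit position j ≥ 0, bit_j(2k) − bit_j(2k+1) − bit_j(2k+2) + bit_j(2k+3) = 0, and 1 − 1 − 1 + 1 = 0; consequently, inserting the four pairs (2k,1), (2k+1,−1), (2k+2,−1), (2k+3,1) into a deterministic collision-detection structure that maintains, for each bit position j, the counter B_j = Σ_i c_i·bit_j(x_i) together with the total count X = Σ_i c_i, zeroes the entire structure, so any further single element inserted afterwards is falsely identified as the only element present. -/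
/-- `bit j x` is the `j`-th bit of the binary representation of `x`, as an integer. -/
def bit (j x : ℕ) : ℤ := if Nat.testBit x j then 1 else 0

/-- The total-count counter `X = Σᵢ cᵢ` of a stream of pairs `(xᵢ, cᵢ)`. -/
def sketchX (l : List (ℕ × ℤ)) : ℤ := (l.map Prod.snd).sum

/-- The bit counter `B_j = Σᵢ cᵢ · bit_j(xᵢ)` of a stream of pairs `(xᵢ, cᵢ)`. -/
def sketchB (j : ℕ) (l : List (ℕ × ℤ)) : ℤ := (l.map fun p => p.2 * bit j p.1).sum

lemma bit_key (k j : ℕ) :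
    bit j (2 * k) - bit j (2 * k + 1) - bit j (2 * k + 2) + bit j (2 * k + 3) = 0 := by
  unfold bit
  cases j with
  | zero =>
    simp [Nat.testBit_zero, Nat.add_mul_mod_self_left, Nat.mul_add_mod,
      Nat.mul_mod_right, show 2*k+3 = 2*(k+1)+1 by ring, show 2*k+2 = 2*(k+1) by ring]
  | succ n =>
    have h0 : (2 * k).testBit (n+1) = k.testBit n := by
      rw [Nat.testBit_succ]; congr 1; omega
    have h1 : (2 * k + 1).testBit (n+1) = k.testBit n := by
      rw [Nat.testBit_succ]; congr 1; omega
    have h2 : (2 * k + 2).testBit (n+1) = (k+1).testBit n := by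
      rw [Nat.testBit_succ]; congr 1; omega
    have h3 : (2 * k + 3).testBit (n+1) = (k+1).testBit n := by
      rw [Nat.testBit_succ]; congr 1; omega
    rw [h0, h1, h2, h3]; ring

/-- **Counterexample to the deterministic collision detection structure.**
For every `k` and every bit position `j`,
`bit_j(2k) − bit_j(2k+1) − bit_j(2k+2) + bit_j(2k+3) = 0` and `1 − 1 − 1 + 1 = 0`;
consequently inserting the four pairs `(2k,1), (2k+1,−1), (2k+2,−1), (2k+3,1)`
zeroes all counters of the structure, so for any further element `(k',c')`
inserted afterwards, all counters equal those of the stream consisting of the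
single element `(k',c')` alone, i.e. `(k',c')` is falsely identified as the
only element present. -/
theorem collision_detection_structure_fails (k : ℕ) :
    (∀ j : ℕ,
      bit j (2 * k) - bit j (2 * k + 1) - bit j (2 * k + 2) + bit j (2 * k + 3) = 0) ∧
    ((1 - 1 - 1 + 1 : ℤ) = 0) ∧
    (sketchX [(2 * k, 1), (2 * k + 1, -1), (2 * k + 2, -1), (2 * k + 3, 1)] = 0 ∧
      ∀ j : ℕ,
        sketchB j [(2 * k, 1), (2 * k + 1, -1), (2 * k + 2, -1), (2 * k + 3, 1)] = 0) ∧
    (∀ (k' : ℕ) (c' : ℤ),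
      sketchX ([(2 * k, 1), (2 * k + 1, -1), (2 * k + 2, -1), (2 * k + 3, 1)] ++
          [(k', c')]) = sketchX [(k', c')] ∧
      ∀ j : ℕ,
        sketchB j ([(2 * k, 1), (2 * k + 1, -1), (2 * k + 2, -1), (2 * k + 3, 1)] ++
          [(k', c')]) = sketchB j [(k', c')]) := by
  refine ⟨fun j => bit_key k j, by ring, ⟨by simp [sketchX], fun j => ?_⟩, fun k' c' => ⟨by simp [sketchX], fun j => ?_⟩⟩
  · have := bit_key k j; simp [sketchB]; linarith
  · have := bit_key k j; simp [sketchB]; linarith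
end

section
/- Let K̃ be a positive integer, δ ∈ (0,1), and let S be a finite set of at most K̃ values. Let τ' = ⌈4·log₂(K̃/δ)⌉ and let h_1, …, h_{τ'} be random functions from the values to the bins {0,…,8K̃−1} such that the τ' functions are mutually independent and each h_a is pairwise independent with uniformly distributed values. For k ∈ S let C_k be the event that k collides with another element of S (i.e., ∃ j ∈ S, j ≠ k, h_a(j) = h_a(k)) in at least τ'/2 of the τ' arrays. Then for each k ∈ S, Pr[C_k] ≤ (δ/K̃)², and hence the probability that some element of S collides in at least half of the arrays is at most δ²/K̃. -/
open MeasureTheory ProbabilityTheory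
open scoped ENNReal Classical

/-! In one array, `k` meets a fixed `j ≠ k` with probability `1/(8K̃)` by pairwise independence,
so by a union bound over `S` it collides with probability at most `1/8`. The arrays are
independent, so a union bound over the `m`-subsets of arrays, `m = ⌈τ'/2⌉`, bounds the probability
of colliding in `m` of them by `C(τ', m) 8⁻ᵐ ≤ 4ᵐ 8⁻ᵐ = 2⁻ᵐ`, and `2ᵐ ≥ (K̃/δ)²` by the choice
of `τ'`. A last union bound over `k ∈ S` gives the second claim. -/

section Collisions

variable {Ω ι : Type*} [MeasurableSpace Ω] {μ : Measure Ω}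

theorem measure_eq_le_inv_of_pairwise_uniform {X Y : Ω → ℕ} {N : ℕ} (hY : ∀ ω, Y ω < N)
    (hXY : ∀ v < N, μ {ω | X ω = v ∧ Y ω = v} = (N : ℝ≥0∞)⁻¹ * (N : ℝ≥0∞)⁻¹) :
    μ {ω | X ω = Y ω} ≤ (N : ℝ≥0∞)⁻¹ := by
  have hsub : {ω | X ω = Y ω} ⊆ ⋃ v ∈ Finset.range N, {ω | X ω = v ∧ Y ω = v} := by
    intro ω hω
    simp only [Set.mem_iUnion, Finset.mem_range]
    exact ⟨Y ω, hY ω, hω, rfl⟩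
  calc μ {ω | X ω = Y ω}
      ≤ ∑ v ∈ Finset.range N, μ {ω | X ω = v ∧ Y ω = v} :=
        (measure_mono hsub).trans (measure_biUnion_finset_le _ _)
    _ = (N : ℝ≥0∞) * (N : ℝ≥0∞)⁻¹ * (N : ℝ≥0∞)⁻¹ := by
        rw [Finset.sum_congr rfl fun v hv => hXY v (Finset.mem_range.mp hv), Finset.sum_const,
          Finset.card_range, nsmul_eq_mul, mul_assoc]
    _ ≤ (N : ℝ≥0∞)⁻¹ := mul_le_of_le_one_left' (ENNReal.mul_inv_le_one _)

theorem measure_exists_ne_eq_le_card_mul_inv {X : ι → Ω → ℕ} {N : ℕ} (S : Finset ι) {k : ι}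
    (hk : ∀ ω, X k ω < N)
    (hpair : ∀ j ≠ k, ∀ v < N, μ {ω | X j ω = v ∧ X k ω = v} = (N : ℝ≥0∞)⁻¹ * (N : ℝ≥0∞)⁻¹) :
    μ {ω | ∃ j ∈ S, j ≠ k ∧ X j ω = X k ω} ≤ S.card * (N : ℝ≥0∞)⁻¹ := by
  have hsub : {ω | ∃ j ∈ S, j ≠ k ∧ X j ω = X k ω}
      ⊆ ⋃ j ∈ S.filter (· ≠ k), {ω | X j ω = X k ω} := by
    rintro ω ⟨j, hjS, hjk, hj⟩
    simp only [Set.mem_iUnion, Finset.mem_filter]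
    exact ⟨j, ⟨hjS, hjk⟩, hj⟩
  calc μ {ω | ∃ j ∈ S, j ≠ k ∧ X j ω = X k ω}
      ≤ ∑ j ∈ S.filter (· ≠ k), μ {ω | X j ω = X k ω} :=
        (measure_mono hsub).trans (measure_biUnion_finset_le _ _)
    _ ≤ ∑ _j ∈ S.filter (· ≠ k), (N : ℝ≥0∞)⁻¹ := Finset.sum_le_sum fun j hj =>
        measure_eq_le_inv_of_pairwise_uniform hk (hpair j (Finset.mem_filter.mp hj).2)
    _ ≤ S.card * (N : ℝ≥0∞)⁻¹ := by
        rw [Finset.sum_const, nsmul_eq_mul]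
        gcongr
        exact Finset.filter_subset _ _

end Collisions

theorem ENNReal.natCast_mul_inv_natCast_mul_le (c n : ℕ) :
    (n : ℝ≥0∞) * ((c * n : ℕ) : ℝ≥0∞)⁻¹ ≤ (c : ℝ≥0∞)⁻¹ := by
  rcases Nat.eq_zero_or_pos n with rfl | hn
  · simp
  rw [Nat.cast_mul,
    ENNReal.mul_inv (Or.inr (ENNReal.natCast_ne_top n)) (Or.inl (ENNReal.natCast_ne_top c)),
    mul_left_comm, ENNReal.mul_inv_cancel (by exact_mod_cast hn.ne') (by simp), mul_one]

theorem ProbabilityTheory.iIndepFun.measure_le_card_filter_mem_le {Ω α β : Type*}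
    [MeasurableSpace Ω] [Fintype α] [MeasurableSpace β] {μ : Measure Ω} {f : α → Ω → β}
    (hf : iIndepFun f μ) {B : Set β} [DecidablePred (· ∈ B)] (hB : MeasurableSet B) {p : ℝ≥0∞}
    (hp : ∀ a, μ (f a ⁻¹' B) ≤ p) (m : ℕ) :
    μ {ω | m ≤ (Finset.univ.filter fun a => f a ω ∈ B).card}
      ≤ (Fintype.card α).choose m * p ^ m := by
  have hsub : {ω | m ≤ (Finset.univ.filter fun a => f a ω ∈ B).card}
      ⊆ ⋃ T ∈ Finset.univ.powersetCard m, ⋂ a ∈ T, f a ⁻¹' B := by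
    intro ω hω
    obtain ⟨T, hT, hTcard⟩ := Finset.exists_subset_card_eq hω
    simp only [Set.mem_iUnion, Set.mem_iInter, Finset.mem_powersetCard]
    exact ⟨T, ⟨T.subset_univ, hTcard⟩, fun a ha => (Finset.mem_filter.mp (hT ha)).2⟩
  have hinter : ∀ T : Finset α, μ (⋂ a ∈ T, f a ⁻¹' B) = ∏ a ∈ T, μ (f a ⁻¹' B) := fun T =>
    hf.meas_biInter fun a _ => MeasurableSpace.measurableSet_comap.mpr ⟨B, hB, rfl⟩
  calc μ {ω | m ≤ (Finset.univ.filter fun a => f a ω ∈ B).card}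
      ≤ ∑ T ∈ Finset.univ.powersetCard m, μ (⋂ a ∈ T, f a ⁻¹' B) :=
        (measure_mono hsub).trans (measure_biUnion_finset_le _ _)
    _ ≤ ∑ _T ∈ Finset.univ.powersetCard m, p ^ m := by
        refine Finset.sum_le_sum fun T hT => ?_
        rw [hinter, ← (Finset.mem_powersetCard.mp hT).2]
        exact Finset.prod_le_pow_card _ _ _ fun a _ => hp a
    _ = (Fintype.card α).choose m * p ^ m := by
        rw [Finset.sum_const, Finset.card_powersetCard, Finset.card_univ, nsmul_eq_mul]

theorem ENNReal.natCast_choose_mul_inv_eight_pow_le {n m : ℕ} (h : n ≤ 2 * m) :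
    (n.choose m : ℝ≥0∞) * 8⁻¹ ^ m ≤ 2⁻¹ ^ m := by
  have hchoose : (n.choose m : ℝ≥0∞) ≤ 4 ^ m := by
    have : n.choose m ≤ 4 ^ m := (Nat.choose_le_two_pow n m).trans <| by
      rw [show 4 = 2 ^ 2 by rfl, ← pow_mul]; exact Nat.pow_le_pow_right two_pos h
    exact_mod_cast this
  calc (n.choose m : ℝ≥0∞) * 8⁻¹ ^ m ≤ 4 ^ m * 8⁻¹ ^ m := by gcongr
    _ = 2⁻¹ ^ m := by
        rw [← mul_pow, show (8 : ℝ≥0∞) = 2 * 4 by norm_num,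
          ENNReal.mul_inv (by norm_num) (by norm_num), mul_left_comm,
          ENNReal.mul_inv_cancel (by norm_num) (by norm_num), mul_one]

theorem ENNReal.inv_two_pow_le_ofReal_inv_sq {x : ℝ} (hx : 0 < x) {m : ℕ}
    (h : 2 * Real.logb 2 x ≤ m) : (2⁻¹ : ℝ≥0∞) ^ m ≤ ENNReal.ofReal (x⁻¹ ^ 2) := by
  have hx2 : x ^ 2 ≤ 2 ^ m := by
    rw [← Real.rpow_natCast 2 m, ← Real.logb_le_iff_le_rpow (by norm_num) (by positivity),
      Real.logb_pow]
    exact_mod_cast h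
  calc (2⁻¹ : ℝ≥0∞) ^ m = ENNReal.ofReal ((2 ^ m)⁻¹) := by
        rw [ENNReal.ofReal_inv_of_pos (by positivity), ENNReal.ofReal_pow zero_le_two,
          ENNReal.ofReal_ofNat, ENNReal.inv_pow]
    _ ≤ ENNReal.ofReal (x⁻¹ ^ 2) := ENNReal.ofReal_le_ofReal <| by
        rw [inv_pow]
        exact inv_anti₀ (by positivity) hx2

theorem measure_exists_mem_le_card_mul {Ω ι : Type*} [MeasurableSpace Ω] {μ : Measure Ω}
    {S : Finset ι} {P : ι → Ω → Prop} {ε : ℝ≥0∞} (hP : ∀ k ∈ S, μ {ω | P k ω} ≤ ε) :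
    μ {ω | ∃ k ∈ S, P k ω} ≤ S.card * ε := by
  calc μ {ω | ∃ k ∈ S, P k ω} = μ (⋃ k ∈ S, {ω | P k ω}) := by
        congr 1; ext ω; simp
    _ ≤ ∑ _k ∈ S, ε := (measure_biUnion_finset_le _ _).trans (Finset.sum_le_sum hP)
    _ = S.card * ε := by rw [Finset.sum_const, nsmul_eq_mul]

theorem measurableSet_exists_ne_eq {κ : Type*} [Countable κ] (k : κ) :
    MeasurableSet {g : κ → ℕ | ∃ j, j ≠ k ∧ g j = g k} := by
  simp only [Set.ofPred_exists, Set.ofPred_and]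
  exact .iUnion fun j => (MeasurableSet.const _).inter
    (measurableSet_eq_fun (measurable_pi_apply j) (measurable_pi_apply k))

section HashFamily

variable {Ω ι : Type*} [MeasurableSpace Ω] {μ : Measure Ω} {n K : ℕ} {S : Finset ι}
  {h : Fin n → ι → Ω → ℕ}

theorem measure_exists_collision_le_inv_eight (hS : S.card ≤ K) (a : Fin n) {k : ι}
    (hrange : ∀ ω, h a k ω < 8 * K)
    (hpair : ∀ j ≠ k, ∀ v < 8 * K, μ {ω | h a j ω = v ∧ h a k ω = v} =
      ((8 * K : ℕ) : ℝ≥0∞)⁻¹ * ((8 * K : ℕ) : ℝ≥0∞)⁻¹) :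
    μ {ω | ∃ j ∈ S, j ≠ k ∧ h a j ω = h a k ω} ≤ 8⁻¹ :=
  calc μ {ω | ∃ j ∈ S, j ≠ k ∧ h a j ω = h a k ω}
      ≤ S.card * ((8 * K : ℕ) : ℝ≥0∞)⁻¹ :=
        measure_exists_ne_eq_le_card_mul_inv S hrange hpair
    _ ≤ K * ((8 * K : ℕ) : ℝ≥0∞)⁻¹ := by gcongr
    _ ≤ 8⁻¹ := by exact_mod_cast ENNReal.natCast_mul_inv_natCast_mul_le 8 K

theorem measure_le_card_filter_collision_le
    (hindep : iIndepFun (fun a ω (x : S) => h a x ω) μ) {k : ι} (hk : k ∈ S)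
    {p : ℝ≥0∞} (hcoll : ∀ a, μ {ω | ∃ j ∈ S, j ≠ k ∧ h a j ω = h a k ω} ≤ p) (m : ℕ) :
    μ {ω | m ≤ (Finset.univ.filter fun a => ∃ j ∈ S, j ≠ k ∧ h a j ω = h a k ω).card}
      ≤ n.choose m * p ^ m := by
  set B := {g : S → ℕ | ∃ j, j ≠ ⟨k, hk⟩ ∧ g j = g ⟨k, hk⟩}
  have hB : ∀ a ω, (fun x : S => h a x ω) ∈ B ↔ ∃ j ∈ S, j ≠ k ∧ h a j ω = h a k ω := by
    simp only [B, Set.mem_ofPred_eq, ne_eq, Subtype.ext_iff, Subtype.exists]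
    grind
  have hpre : ∀ a, (fun ω (x : S) => h a x ω) ⁻¹' B =
      {ω | ∃ j ∈ S, j ≠ k ∧ h a j ω = h a k ω} := fun a => Set.ext (hB a)
  have hcount : ∀ ω, (Finset.univ.filter fun a => ∃ j ∈ S, j ≠ k ∧ h a j ω = h a k ω) =
      Finset.univ.filter fun a => (fun x : S => h a x ω) ∈ B := fun ω =>
    Finset.filter_congr fun a _ => (hB a ω).symm
  simp_rw [hcount]
  exact (hindep.measure_le_card_filter_mem_le (measurableSet_exists_ne_eq _)
    (fun a => (hpre a).symm ▸ hcoll a) m).trans_eq (by rw [Fintype.card_fin])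

end HashFamily

theorem frs_nonstrict_false_negative_bound_general
    {Ω : Type*} [MeasurableSpace Ω] (μ : Measure Ω)
    {ι : Type*} (Ktil : ℕ) (hK : 0 < Ktil) (δ : ℝ) (hδ : δ ∈ Set.Ioo (0 : ℝ) 1)
    (S : Finset ι) (hS : S.card ≤ Ktil)
    (τ' : ℕ) (hτ : τ' = ⌈4 * Real.logb 2 ((Ktil : ℝ) / δ)⌉₊)
    (h : Fin τ' → ι → Ω → ℕ)
    (hrange : ∀ a x ω, h a x ω < 8 * Ktil)
    -- the τ' random functions (restricted to S) are mutually independent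
    (hindep : iIndepFun
      (fun (a : Fin τ') (ω : Ω) => (fun x : S => h a x ω)) μ)
    -- and pairwise independent
    (hpair : ∀ (a : Fin τ') (x y : ι), x ≠ y → ∀ v w, v < 8 * Ktil → w < 8 * Ktil →
      μ {ω | h a x ω = v ∧ h a y ω = w} =
        (((8 * Ktil : ℕ) : ℝ≥0∞))⁻¹ * (((8 * Ktil : ℕ) : ℝ≥0∞))⁻¹) :
    (∀ k ∈ S,
      μ {ω | ((τ' : ℝ) / 2) ≤
          ((Finset.univ.filter fun a : Fin τ' =>
            ∃ j ∈ S, j ≠ k ∧ h a j ω = h a k ω).card : ℝ)} ≤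
        ENNReal.ofReal ((δ / Ktil) ^ 2)) ∧
    μ {ω | ∃ k ∈ S, ((τ' : ℝ) / 2) ≤
        ((Finset.univ.filter fun a : Fin τ' =>
          ∃ j ∈ S, j ≠ k ∧ h a j ω = h a k ω).card : ℝ)} ≤
      ENNReal.ofReal (δ ^ 2 / Ktil) := by
  set m := ⌈(τ' : ℝ) / 2⌉₊
  have hτm : τ' ≤ 2 * m := by
    have := Nat.le_ceil ((τ' : ℝ) / 2)
    exact_mod_cast (show (τ' : ℝ) ≤ 2 * m by linarith)
  have hlog : 2 * Real.logb 2 ((Ktil : ℝ) / δ) ≤ m := by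
    have := Nat.le_ceil (4 * Real.logb 2 ((Ktil : ℝ) / δ))
    have := Nat.le_ceil ((τ' : ℝ) / 2)
    rw [← hτ] at *
    linarith
  have hsingle : ∀ k ∈ S, μ {ω | ((τ' : ℝ) / 2) ≤
      ((Finset.univ.filter fun a : Fin τ' => ∃ j ∈ S, j ≠ k ∧ h a j ω = h a k ω).card : ℝ)} ≤
        ENNReal.ofReal ((δ / Ktil) ^ 2) := fun k hk => calc
    _ ≤ μ {ω | m ≤ (Finset.univ.filter fun a => ∃ j ∈ S, j ≠ k ∧ h a j ω = h a k ω).card} :=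
        measure_mono fun ω hω => Nat.ceil_le.mpr hω
    _ ≤ τ'.choose m * 8⁻¹ ^ m := measure_le_card_filter_collision_le hindep hk
        (fun a => measure_exists_collision_le_inv_eight hS a (hrange a k)
          fun j hj v hv => hpair a j k hj v v hv hv) m
    _ ≤ 2⁻¹ ^ m := ENNReal.natCast_choose_mul_inv_eight_pow_le hτm
    _ ≤ ENNReal.ofReal ((δ / Ktil) ^ 2) := by
        simpa using ENNReal.inv_two_pow_le_ofReal_inv_sq (div_pos (by exact_mod_cast hK) hδ.1) hlog
  refine ⟨hsingle, (measure_exists_mem_le_card_mul hsingle).trans ?_⟩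
  calc (S.card : ℝ≥0∞) * ENNReal.ofReal ((δ / Ktil) ^ 2)
      ≤ Ktil * ENNReal.ofReal ((δ / Ktil) ^ 2) := by gcongr
    _ = ENNReal.ofReal (δ ^ 2 / Ktil) := by
        rw [← ENNReal.ofReal_natCast, ← ENNReal.ofReal_mul (by positivity)]
        congr 1
        field_simp

/-- **False negatives in Non-strict FRS.**
With `τ' = ⌈4·log₂(K̃/δ)⌉` arrays of `8K̃` bins and mutually independent
pairwise-independent uniform hash functions, for each `k ∈ S` the probability
that `k` collides with another element of `S` in at least `τ'/2` of the arrays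
is at most `(δ/K̃)²`; hence the probability that some element of `S` collides in
at least half of the arrays is at most `δ²/K̃`. -/
theorem frs_nonstrict_false_negative_bound
    {Ω : Type*} [MeasurableSpace Ω] (μ : Measure Ω) [IsProbabilityMeasure μ]
    {ι : Type*} (Ktil : ℕ) (hK : 0 < Ktil) (δ : ℝ) (hδ : δ ∈ Set.Ioo (0 : ℝ) 1)
    (S : Finset ι) (hS : S.card ≤ Ktil)
    (τ' : ℕ) (hτ : τ' = ⌈4 * Real.logb 2 ((Ktil : ℝ) / δ)⌉₊)
    (h : Fin τ' → ι → Ω → ℕ)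
    (hmeas : ∀ a x, Measurable (h a x))
    (hrange : ∀ a x ω, h a x ω < 8 * Ktil)
    -- the τ' random functions (restricted to S) are mutually independent
    (hindep : iIndepFun
      (fun (a : Fin τ') (ω : Ω) => (fun x : S => h a x ω)) μ)
    -- each function is uniform on the bins
    (hunif : ∀ a x, ∀ v < 8 * Ktil,
      μ {ω | h a x ω = v} = (((8 * Ktil : ℕ) : ℝ≥0∞))⁻¹)
    -- and pairwise independent
    (hpair : ∀ (a : Fin τ') (x y : ι), x ≠ y → ∀ v w, v < 8 * Ktil → w < 8 * Ktil →
      μ {ω | h a x ω = v ∧ h a y ω = w} =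
        (((8 * Ktil : ℕ) : ℝ≥0∞))⁻¹ * (((8 * Ktil : ℕ) : ℝ≥0∞))⁻¹) :
    (∀ k ∈ S,
      μ {ω | ((τ' : ℝ) / 2) ≤
          ((Finset.univ.filter fun a : Fin τ' =>
            ∃ j ∈ S, j ≠ k ∧ h a j ω = h a k ω).card : ℝ)} ≤
        ENNReal.ofReal ((δ / Ktil) ^ 2)) ∧
    μ {ω | ∃ k ∈ S, ((τ' : ℝ) / 2) ≤
        ((Finset.univ.filter fun a : Fin τ' =>
          ∃ j ∈ S, j ≠ k ∧ h a j ω = h a k ω).card : ℝ)} ≤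
      ENNReal.ofReal (δ ^ 2 / Ktil) :=
  frs_nonstrict_false_negative_bound_general μ Ktil hK δ hδ S hS τ' hτ h hrange hindep hpair
end

section
/- Let K̃ be a positive integer, δ ∈ (0,1), and let S be a finite set of at most K̃ values. Let τ' = ⌈4·log₂(K̃/δ)⌉ and let h_1, …, h_{τ'} be random functions from the values to the bins {0,…,8K̃−1} such that the τ' functions are mutually independent and each h_a is pairwise independent with uniformly distributed values. Fix any value k ∉ S. Then the probability that in at least τ'/2 of the τ' arrays the bin h_a(k) contains an element of S (i.e., ∃ j ∈ S with h_a(j) = h_a(k)) is at most (δ/K̃)². Hence for any set A of at most K̃·log₂(K̃/δ) candidate values disjoint from S, the probability that some candidate in A has a nonempty bin in at least half of the arrays is at most K̃·log₂(K̃/δ)·(δ/K̃)². -/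
open MeasureTheory ProbabilityTheory
open scoped ENNReal Classical

/-!
By pairwise independence, a fixed element of `S` lands in the bin of `k` with probability at
most `1/(8K̃)`, so the bin of `k` in a given array is occupied with probability at most
`|S|/(8K̃) ≤ 1/8`. The arrays are independent, so a fixed set of `m = ⌈τ'/2⌉` arrays is
simultaneously occupied with probability at most `8⁻ᵐ`; the union bound over the
`C(τ', m) ≤ 2^τ' ≤ 4ᵐ` such sets gives `2⁻ᵐ`, which is at most `(δ/K̃)²` because
`m ≥ 2 log₂(K̃/δ)`. A union bound over `A` gives the second claim.
-/

open Finset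

section

variable {Ω ι : Type*} [MeasurableSpace Ω] {μ : Measure Ω}

lemma ProbabilityTheory.iIndepFun.iIndepSet_preimage {β : ι → Type*} [∀ i, MeasurableSpace (β i)]
    {f : ∀ i, Ω → β i} (hf : iIndepFun f μ) {t : ∀ i, Set (β i)}
    (ht : ∀ i, MeasurableSet (t i)) : iIndepSet (fun i => f i ⁻¹' t i) μ :=
  (iIndepSet_iff_iIndep _ _).2 <| iIndep_of_iIndep_of_le ((iIndepFun_iff_iIndep _ _ _).1 hf)
    fun i => MeasurableSpace.generateFrom_le <| by rintro _ rfl; exact ⟨t i, ht i, rfl⟩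

lemma ProbabilityTheory.iIndepSet.measure_le_card_filter_mem_le [Fintype ι] {B : ι → Set Ω}
    (hB : iIndepSet B μ) {p : ℝ≥0∞} (hp : ∀ i, μ (B i) ≤ p) (m : ℕ) :
    μ {ω | m ≤ #{i | ω ∈ B i}} ≤ (Fintype.card ι).choose m * p ^ m := by
  have hcover : {ω | m ≤ #{i | ω ∈ B i}} ⊆ ⋃ T ∈ powersetCard m univ, ⋂ i ∈ T, B i := by
    intro ω hω
    obtain ⟨T, hT, hTcard⟩ := exists_subset_card_eq hω
    exact Set.mem_biUnion (mem_powersetCard.2 ⟨subset_univ T, hTcard⟩)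
      (Set.mem_iInter₂.2 fun i hi => (mem_filter.1 (hT hi)).2)
  calc μ {ω | m ≤ #{i | ω ∈ B i}}
      ≤ ∑ T ∈ powersetCard m univ, μ (⋂ i ∈ T, B i) :=
        (measure_mono hcover).trans (measure_biUnion_finset_le _ _)
    _ ≤ ∑ T ∈ powersetCard m (univ : Finset ι), p ^ m := by
        refine sum_le_sum fun T hT => ?_
        rw [hB.meas_biInter, ← (mem_powersetCard.1 hT).2, ← prod_const]
        exact prod_le_prod' fun i _ => hp i
    _ = (Fintype.card ι).choose m * p ^ m := by
        rw [sum_const, card_powersetCard, card_univ, nsmul_eq_mul]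

lemma measure_eq_le_inv_of_diag_uniform {X Y : Ω → ℕ} {n : ℕ} (hX : ∀ ω, X ω < n)
    (hXY : ∀ v < n, μ {ω | X ω = v ∧ Y ω = v} = (n : ℝ≥0∞)⁻¹ * (n : ℝ≥0∞)⁻¹) :
    μ {ω | X ω = Y ω} ≤ (n : ℝ≥0∞)⁻¹ := by
  have hcover : {ω | X ω = Y ω} ⊆ ⋃ v ∈ range n, {ω | X ω = v ∧ Y ω = v} :=
    fun ω hω => Set.mem_biUnion (mem_range.2 (hX ω)) ⟨rfl, hω.symm⟩
  calc μ {ω | X ω = Y ω}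
      ≤ ∑ v ∈ range n, μ {ω | X ω = v ∧ Y ω = v} :=
        (measure_mono hcover).trans (measure_biUnion_finset_le _ _)
    _ = n * (n : ℝ≥0∞)⁻¹ * (n : ℝ≥0∞)⁻¹ := by
        rw [sum_congr rfl fun v hv => hXY v (mem_range.1 hv), sum_const, card_range,
          nsmul_eq_mul, mul_assoc]
    _ ≤ (n : ℝ≥0∞)⁻¹ := mul_le_of_le_one_left' (ENNReal.mul_inv_le_one _)

lemma measure_exists_eq_le_card_mul_inv {X : ι → Ω → ℕ} {n : ℕ} (hX : ∀ j ω, X j ω < n)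
    (hpair : ∀ x y, x ≠ y → ∀ v w, v < n → w < n →
      μ {ω | X x ω = v ∧ X y ω = w} = (n : ℝ≥0∞)⁻¹ * (n : ℝ≥0∞)⁻¹)
    {S : Finset ι} {k : ι} (hk : k ∉ S) :
    μ {ω | ∃ j ∈ S, X j ω = X k ω} ≤ #S * (n : ℝ≥0∞)⁻¹ := by
  have hcover : {ω | ∃ j ∈ S, X j ω = X k ω} = ⋃ j ∈ S, {ω | X j ω = X k ω} := by
    ext ω; simp
  calc μ {ω | ∃ j ∈ S, X j ω = X k ω}
      ≤ ∑ j ∈ S, μ {ω | X j ω = X k ω} := hcover ▸ measure_biUnion_finset_le _ _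
    _ ≤ ∑ _j ∈ S, (n : ℝ≥0∞)⁻¹ := sum_le_sum fun j hj =>
        measure_eq_le_inv_of_diag_uniform (hX j) fun v hv =>
          hpair j k (ne_of_mem_of_not_mem hj hk) v v hv hv
    _ = #S * (n : ℝ≥0∞)⁻¹ := by rw [sum_const, nsmul_eq_mul]

lemma choose_mul_inv_eight_pow_le {τ m : ℕ} (hτ : τ ≤ 2 * m) :
    (τ.choose m : ℝ≥0∞) * 8⁻¹ ^ m ≤ 2⁻¹ ^ m := by
  have hchoose : (τ.choose m : ℝ≥0∞) ≤ 4 ^ m := by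
    calc (τ.choose m : ℝ≥0∞) ≤ 2 ^ τ := by exact_mod_cast Nat.choose_le_two_pow τ m
      _ ≤ 2 ^ (2 * m) := pow_le_pow_right₀ one_le_two hτ
      _ = 4 ^ m := by rw [pow_mul]; norm_num
  calc (τ.choose m : ℝ≥0∞) * 8⁻¹ ^ m ≤ 4 ^ m * 8⁻¹ ^ m := by gcongr
    _ = 2⁻¹ ^ m := by
        rw [← mul_pow]
        congr 1
        rw [show (8 : ℝ≥0∞) = 4 * 2 by norm_num, ENNReal.mul_inv (by norm_num) (by norm_num),
          ← mul_assoc, ENNReal.mul_inv_cancel (by norm_num) (by norm_num), one_mul]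

lemma inv_two_pow_le_of_two_mul_logb_le {x : ℝ} (hx : 0 < x) {m : ℕ}
    (hm : 2 * Real.logb 2 x ≤ m) : (2⁻¹ : ℝ≥0∞) ^ m ≤ ENNReal.ofReal (x⁻¹ ^ 2) := by
  have hsq : x ^ 2 ≤ 2 ^ m := by
    have hlog : Real.logb 2 (x ^ 2) ≤ m := by rw [Real.logb_pow]; push_cast; linarith
    have := (Real.logb_le_iff_le_rpow one_lt_two (by positivity)).1 hlog
    rwa [Real.rpow_natCast] at this
  rw [← ENNReal.ofReal_ofNat 2, ← ENNReal.ofReal_inv_of_pos two_pos,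
    ← ENNReal.ofReal_pow (by norm_num), inv_pow, inv_pow]
  exact ENNReal.ofReal_le_ofReal (inv_anti₀ (by positivity) hsq)

lemma measure_exists_mem_le_ofReal_mul {A : Finset ι} {E : ι → Set Ω} {q c : ℝ} (hq : 0 ≤ q)
    (hA : (#A : ℝ) ≤ c) (hE : ∀ k ∈ A, μ (E k) ≤ ENNReal.ofReal q) :
    μ {ω | ∃ k ∈ A, ω ∈ E k} ≤ ENNReal.ofReal (c * q) := by
  have hcover : {ω | ∃ k ∈ A, ω ∈ E k} ⊆ ⋃ k ∈ A, E k :=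
    fun _ ⟨k, hk, hω⟩ => Set.mem_biUnion hk hω
  calc μ {ω | ∃ k ∈ A, ω ∈ E k} ≤ ∑ k ∈ A, μ (E k) :=
        (measure_mono hcover).trans (measure_biUnion_finset_le A _)
    _ ≤ #A • ENNReal.ofReal q := sum_le_card_nsmul _ _ _ hE
    _ ≤ ENNReal.ofReal (c * q) := by
        rw [nsmul_eq_mul, ← ENNReal.ofReal_natCast, ← ENNReal.ofReal_mul (by positivity)]
        gcongr

end

lemma measurableSet_exists_mem_eq {ι β : Type*} [MeasurableSpace β] [MeasurableEq β]
    (S : Finset ι) (k : ι) : MeasurableSet {f : ι → β | ∃ j ∈ S, f j = f k} := by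
  rw [show {f : ι → β | ∃ j ∈ S, f j = f k} = ⋃ j ∈ S, {f | f j = f k} by ext; simp]
  exact S.measurableSet_biUnion fun j _ =>
    measurableSet_eq_fun (measurable_pi_apply j) (measurable_pi_apply k)

lemma Nat.cast_div_two_le_iff {τ c : ℕ} : (τ : ℝ) / 2 ≤ c ↔ (τ + 1) / 2 ≤ c := by
  rw [div_le_iff₀ two_pos, ← Nat.cast_ofNat, ← Nat.cast_mul, Nat.cast_le]
  omega

lemma natCast_mul_inv_eight_mul_le {s K : ℕ} (hs : s ≤ K) :
    (s : ℝ≥0∞) * ((8 * K : ℕ) : ℝ≥0∞)⁻¹ ≤ 8⁻¹ := by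
  calc (s : ℝ≥0∞) * ((8 * K : ℕ) : ℝ≥0∞)⁻¹ ≤ K * (8⁻¹ * (K : ℝ≥0∞)⁻¹) := by
        push_cast
        rw [ENNReal.mul_inv (by norm_num) (by norm_num)]
        gcongr
    _ = 8⁻¹ * (K * (K : ℝ≥0∞)⁻¹) := by ring
    _ ≤ 8⁻¹ := mul_le_of_le_one_right' (ENNReal.mul_inv_le_one _)

theorem frs_nonstrict_false_positive_bound_general
    {Ω : Type*} [MeasurableSpace Ω] (μ : Measure Ω)
    {ι : Type*} (Ktil : ℕ) (hK : 0 < Ktil) (δ : ℝ) (hδ : δ ∈ Set.Ioo (0 : ℝ) 1)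
    (S : Finset ι) (hS : S.card ≤ Ktil)
    (τ' : ℕ) (hτ : τ' = ⌈4 * Real.logb 2 ((Ktil : ℝ) / δ)⌉₊)
    (h : Fin τ' → ι → Ω → ℕ)
    (hrange : ∀ a x ω, h a x ω < 8 * Ktil)
    -- the τ' random functions are mutually independent
    (hindep : iIndepFun
      (fun (a : Fin τ') (ω : Ω) => (fun x : ι => h a x ω)) μ)
    -- and pairwise independent
    (hpair : ∀ (a : Fin τ') (x y : ι), x ≠ y → ∀ v w, v < 8 * Ktil → w < 8 * Ktil →
      μ {ω | h a x ω = v ∧ h a y ω = w} =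
        (((8 * Ktil : ℕ) : ℝ≥0∞))⁻¹ * (((8 * Ktil : ℕ) : ℝ≥0∞))⁻¹) :
    (∀ k ∉ S,
      μ {ω | ((τ' : ℝ) / 2) ≤
          ((Finset.univ.filter fun a : Fin τ' =>
            ∃ j ∈ S, h a j ω = h a k ω).card : ℝ)} ≤
        ENNReal.ofReal ((δ / Ktil) ^ 2)) ∧
    (∀ A : Finset ι, Disjoint A S →
      (A.card : ℝ) ≤ (Ktil : ℝ) * Real.logb 2 ((Ktil : ℝ) / δ) →
      μ {ω | ∃ k ∈ A, ((τ' : ℝ) / 2) ≤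
          ((Finset.univ.filter fun a : Fin τ' =>
            ∃ j ∈ S, h a j ω = h a k ω).card : ℝ)} ≤
        ENNReal.ofReal ((Ktil : ℝ) * Real.logb 2 ((Ktil : ℝ) / δ) * (δ / Ktil) ^ 2)) := by
  have hKδ : 0 < (Ktil : ℝ) / δ := div_pos (by exact_mod_cast hK) hδ.1
  have single : ∀ k ∉ S,
      μ {ω | ((τ' : ℝ) / 2) ≤ #{a | ∃ j ∈ S, h a j ω = h a k ω}} ≤
        ENNReal.ofReal ((δ / Ktil) ^ 2) := by
    intro k hk
    have hbins : iIndepSet (fun a => {ω | ∃ j ∈ S, h a j ω = h a k ω}) μ :=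
      hindep.iIndepSet_preimage fun _ => measurableSet_exists_mem_eq S k
    have hbin : ∀ a, μ {ω | ∃ j ∈ S, h a j ω = h a k ω} ≤ 8⁻¹ := fun a =>
      (measure_exists_eq_le_card_mul_inv (hrange a) (hpair a) hk).trans
        (natCast_mul_inv_eight_mul_le hS)
    set m := (τ' + 1) / 2
    have hm : 2 * Real.logb 2 (Ktil / δ) ≤ m := by
      have : (τ' : ℝ) ≤ 2 * m := by exact_mod_cast (by omega : τ' ≤ 2 * m)
      linarith [hτ ▸ Nat.le_ceil (4 * Real.logb 2 (Ktil / δ))]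
    calc μ {ω | ((τ' : ℝ) / 2) ≤ #{a | ∃ j ∈ S, h a j ω = h a k ω}}
        = μ {ω | m ≤ #{a | ω ∈ {ω | ∃ j ∈ S, h a j ω = h a k ω}}} := by
          simp only [Nat.cast_div_two_le_iff, Set.mem_ofPred_eq, m]
      _ ≤ τ'.choose m * 8⁻¹ ^ m := by
          simpa using hbins.measure_le_card_filter_mem_le hbin m
      _ ≤ 2⁻¹ ^ m := choose_mul_inv_eight_pow_le (by omega)
      _ ≤ ENNReal.ofReal ((δ / Ktil) ^ 2) := by
          simpa only [inv_div] using inv_two_pow_le_of_two_mul_logb_le hKδ hm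
  exact ⟨single, fun A hA hAcard => measure_exists_mem_le_ofReal_mul (by positivity) hAcard
    fun k hk => single k (disjoint_left.1 hA hk)⟩

/-- **False positives in Non-strict FRS.**
With `τ' = ⌈4·log₂(K̃/δ)⌉` arrays of `8K̃` bins and mutually independent
pairwise-independent uniform hash functions: for any fixed value `k ∉ S`, the
probability that in at least `τ'/2` of the arrays the bin `h a k` contains an
element of `S` is at most `(δ/K̃)²`; hence for any set `A` of at most
`K̃·log₂(K̃/δ)` candidate values disjoint from `S`, the probability that some
candidate in `A` has a nonempty bin in at least half of the arrays is at most
`K̃·log₂(K̃/δ)·(δ/K̃)²`. -/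
theorem frs_nonstrict_false_positive_bound
    {Ω : Type*} [MeasurableSpace Ω] (μ : Measure Ω) [IsProbabilityMeasure μ]
    {ι : Type*} (Ktil : ℕ) (hK : 0 < Ktil) (δ : ℝ) (hδ : δ ∈ Set.Ioo (0 : ℝ) 1)
    (S : Finset ι) (hS : S.card ≤ Ktil)
    (τ' : ℕ) (hτ : τ' = ⌈4 * Real.logb 2 ((Ktil : ℝ) / δ)⌉₊)
    (h : Fin τ' → ι → Ω → ℕ)
    (hmeas : ∀ a x, Measurable (h a x))
    (hrange : ∀ a x ω, h a x ω < 8 * Ktil)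
    -- the τ' random functions are mutually independent
    (hindep : iIndepFun
      (fun (a : Fin τ') (ω : Ω) => (fun x : ι => h a x ω)) μ)
    -- each function is uniform on the bins
    (hunif : ∀ a x, ∀ v < 8 * Ktil,
      μ {ω | h a x ω = v} = (((8 * Ktil : ℕ) : ℝ≥0∞))⁻¹)
    -- and pairwise independent
    (hpair : ∀ (a : Fin τ') (x y : ι), x ≠ y → ∀ v w, v < 8 * Ktil → w < 8 * Ktil →
      μ {ω | h a x ω = v ∧ h a y ω = w} =
        (((8 * Ktil : ℕ) : ℝ≥0∞))⁻¹ * (((8 * Ktil : ℕ) : ℝ≥0∞))⁻¹) :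
    (∀ k ∉ S,
      μ {ω | ((τ' : ℝ) / 2) ≤
          ((Finset.univ.filter fun a : Fin τ' =>
            ∃ j ∈ S, h a j ω = h a k ω).card : ℝ)} ≤
        ENNReal.ofReal ((δ / Ktil) ^ 2)) ∧
    (∀ A : Finset ι, Disjoint A S →
      (A.card : ℝ) ≤ (Ktil : ℝ) * Real.logb 2 ((Ktil : ℝ) / δ) →
      μ {ω | ∃ k ∈ A, ((τ' : ℝ) / 2) ≤
          ((Finset.univ.filter fun a : Fin τ' =>
            ∃ j ∈ S, h a j ω = h a k ω).card : ℝ)} ≤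
        ENNReal.ofReal ((Ktil : ℝ) * Real.logb 2 ((Ktil : ℝ) / δ) * (δ / Ktil) ^ 2)) :=
  frs_nonstrict_false_positive_bound_general μ Ktil hK δ hδ S hS τ' hτ h hrange hindep hpair
end
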